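/- For every twice continuously differentiable f : ℝ → ℂ and every x ∈ ℝ: (i) (D₂*(D₂ f))(x) = (Lf)(x) + 3 f(x); (ii) (D₁(D₁* f))(x) = −f''(x) + f(x); (iii) (D₂(D₂* f))(x) − 3 f(x) = (D₁*(D₁ f))(x). Consequently, for every four times continuously differentiable f : ℝ → ℂ and every x ∈ ℝ, (D₁(D₂(Lf)))(x) = (−∂ₓ² + 1)(D₁(D₂ f))(x). -/

import Mathlib

noncomputable section

/-- `sech x = 1 / cosh x`. -/
def sech (x : ℝ) : ℝ := 1 / Real.cosh x

/-- `D₁ f = f' + tanh · f`. -/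
def D1 (f : ℝ → ℂ) (x : ℝ) : ℂ := deriv f x + (Real.tanh x : ℂ) * f x

/-- `D₂ f = f' + 2 tanh · f`. -/
def D2 (f : ℝ → ℂ) (x : ℝ) : ℂ := deriv f x + 2 * (Real.tanh x : ℂ) * f x

/-- `D₁* f = −f' + tanh · f`. -/
def D1s (f : ℝ → ℂ) (x : ℝ) : ℂ := -(deriv f x) + (Real.tanh x : ℂ) * f x

/-- `D₂* f = −f' + 2 tanh · f`. -/
def D2s (f : ℝ → ℂ) (x : ℝ) : ℂ := -(deriv f x) + 2 * (Real.tanh x : ℂ) * f x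

/-- The linearized operator `L f = −f'' − 6 sech² · f + f`. -/
def Lop (f : ℝ → ℂ) (x : ℝ) : ℂ :=
  -(deriv (deriv f) x) - 6 * (sech x : ℂ) ^ 2 * f x + f x

/-!
Since `tanh' = sech²` and `tanh² + sech² = 1`, expanding the products of the first-order
operators gives `D₂* D₂ = L + 3`, `D₁ D₁* = −∂ₓ² + 1` and `D₂ D₂* − 3 = D₁* D₁`.
Hence `D₂ L = D₂ D₂* D₂ − 3 D₂ = (D₂ D₂* − 3) D₂ = D₁* D₁ D₂`, and applying `D₁`,
`D₁ D₂ L = (D₁ D₁*) D₁ D₂ = (−∂ₓ² + 1) D₁ D₂`.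
-/

lemma tanh_sq_add_sech_sq (x : ℝ) : Real.tanh x ^ 2 + sech x ^ 2 = 1 := by
  rw [Real.tanh_eq_sinh_div_cosh, sech]
  field_simp
  linarith [Real.cosh_sq_sub_sinh_sq x]

lemma ofReal_tanh_sq_add_sech_sq (x : ℝ) : (Real.tanh x : ℂ) ^ 2 + (sech x : ℂ) ^ 2 = 1 := by
  exact_mod_cast tanh_sq_add_sech_sq x

lemma hasDerivAt_tanh (x : ℝ) : HasDerivAt Real.tanh (sech x ^ 2) x := by
  have h := (Real.hasDerivAt_sinh x).div (Real.hasDerivAt_cosh x) (Real.cosh_pos x).ne'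
  rw [show Real.sinh / Real.cosh = Real.tanh from (funext Real.tanh_eq_sinh_div_cosh).symm] at h
  refine h.congr_deriv ?_
  unfold sech
  field_simp
  linarith [Real.cosh_sq_sub_sinh_sq x]

lemma hasDerivAt_ofReal_tanh (x : ℝ) :
    HasDerivAt (fun y => (Real.tanh y : ℂ)) ((sech x : ℂ) ^ 2) x := by
  simpa using (hasDerivAt_tanh x).ofReal_comp

lemma contDiff_tanh {n : WithTop ℕ∞} : ContDiff ℝ n Real.tanh := by
  rw [funext Real.tanh_eq_sinh_div_cosh]
  exact Real.contDiff_sinh.div Real.contDiff_cosh fun y => (Real.cosh_pos y).ne'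

lemma contDiff_ofReal_tanh {n : WithTop ℕ∞} : ContDiff ℝ n (fun y => (Real.tanh y : ℂ)) :=
  Complex.ofRealCLM.contDiff.comp contDiff_tanh

section FirstOrder

variable {f : ℝ → ℂ} {x : ℝ}

lemma hasDerivAt_D1 (hf : DifferentiableAt ℝ f x) (hf' : DifferentiableAt ℝ (deriv f) x) :
    HasDerivAt (D1 f)
      (deriv (deriv f) x + ((sech x : ℂ) ^ 2 * f x + Real.tanh x * deriv f x)) x :=
  hf'.hasDerivAt.add ((hasDerivAt_ofReal_tanh x).mul hf.hasDerivAt)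

lemma hasDerivAt_D1s (hf : DifferentiableAt ℝ f x) (hf' : DifferentiableAt ℝ (deriv f) x) :
    HasDerivAt (D1s f)
      (-deriv (deriv f) x + ((sech x : ℂ) ^ 2 * f x + Real.tanh x * deriv f x)) x :=
  hf'.hasDerivAt.neg.add ((hasDerivAt_ofReal_tanh x).mul hf.hasDerivAt)

lemma hasDerivAt_D2 (hf : DifferentiableAt ℝ f x) (hf' : DifferentiableAt ℝ (deriv f) x) :
    HasDerivAt (D2 f)
      (deriv (deriv f) x + (2 * (sech x : ℂ) ^ 2 * f x + 2 * Real.tanh x * deriv f x)) x :=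
  hf'.hasDerivAt.add (((hasDerivAt_ofReal_tanh x).const_mul 2).mul hf.hasDerivAt)

lemma hasDerivAt_D2s (hf : DifferentiableAt ℝ f x) (hf' : DifferentiableAt ℝ (deriv f) x) :
    HasDerivAt (D2s f)
      (-deriv (deriv f) x + (2 * (sech x : ℂ) ^ 2 * f x + 2 * Real.tanh x * deriv f x)) x :=
  hf'.hasDerivAt.neg.add (((hasDerivAt_ofReal_tanh x).const_mul 2).mul hf.hasDerivAt)

lemma D2s_D2 (hf : DifferentiableAt ℝ f x) (hf' : DifferentiableAt ℝ (deriv f) x) :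
    D2s (D2 f) x = Lop f x + 3 * f x := by
  rw [D2s, (hasDerivAt_D2 hf hf').deriv, D2, Lop]
  linear_combination 4 * f x * ofReal_tanh_sq_add_sech_sq x

lemma D1_D1s (hf : DifferentiableAt ℝ f x) (hf' : DifferentiableAt ℝ (deriv f) x) :
    D1 (D1s f) x = -deriv (deriv f) x + f x := by
  rw [D1, (hasDerivAt_D1s hf hf').deriv, D1s]
  linear_combination f x * ofReal_tanh_sq_add_sech_sq x

lemma D2_D2s_sub (hf : DifferentiableAt ℝ f x) (hf' : DifferentiableAt ℝ (deriv f) x) :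
    D2 (D2s f) x - 3 * f x = D1s (D1 f) x := by
  rw [D2, (hasDerivAt_D2s hf hf').deriv, D2s, D1s, (hasDerivAt_D1 hf hf').deriv, D1]
  linear_combination 3 * f x * ofReal_tanh_sq_add_sech_sq x

lemma D2_sub_const_mul {g : ℝ → ℂ} (c : ℂ) (hf : DifferentiableAt ℝ f x)
    (hg : DifferentiableAt ℝ g x) : D2 (fun y => f y - c * g y) x = D2 f x - c * D2 g x := by
  rw [D2, D2, D2, deriv_fun_sub hf (hg.const_mul c), deriv_const_mul c hg]
  ring

variable {n : WithTop ℕ∞}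

lemma contDiff_D1 (hf : ContDiff ℝ (n + 1) f) : ContDiff ℝ n (D1 f) :=
  hf.deriv'.add (contDiff_ofReal_tanh.mul (hf.of_le le_self_add))

lemma contDiff_D2 (hf : ContDiff ℝ (n + 1) f) : ContDiff ℝ n (D2 f) :=
  hf.deriv'.add ((contDiff_const.mul contDiff_ofReal_tanh).mul (hf.of_le le_self_add))

lemma contDiff_D2s (hf : ContDiff ℝ (n + 1) f) : ContDiff ℝ n (D2s f) :=
  hf.deriv'.neg.add ((contDiff_const.mul contDiff_ofReal_tanh).mul (hf.of_le le_self_add))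

end FirstOrder

/-- Factorization identities for the linearized operator and the resulting
conjugation identity `D₁ D₂ L = (−∂ₓ² + 1) D₁ D₂`. -/
theorem factorization_identities :
    (∀ f : ℝ → ℂ, ContDiff ℝ 2 f → ∀ x : ℝ,
        D2s (D2 f) x = Lop f x + 3 * f x ∧
        D1 (D1s f) x = -(deriv (deriv f) x) + f x ∧
        D2 (D2s f) x - 3 * f x = D1s (D1 f) x) ∧
      ∀ f : ℝ → ℂ, ContDiff ℝ 4 f → ∀ x : ℝ,
        D1 (D2 (Lop f)) x = -(deriv (deriv (D1 (D2 f))) x) + D1 (D2 f) x := by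
  refine ⟨fun f hf x => ?_, fun f hf x => ?_⟩
  · have hf₁ := hf.differentiable two_ne_zero x
    have hf₂ := hf.differentiable_deriv_two x
    exact ⟨D2s_D2 hf₁ hf₂, D1_D1s hf₁ hf₂, D2_D2s_sub hf₁ hf₂⟩
  have hf₂ : ContDiff ℝ 2 f := hf.of_le (by norm_num)
  have hD2f : ContDiff ℝ 2 (D2 f) := contDiff_D2 (hf.of_le (by norm_num))
  have hD2sD2f : ContDiff ℝ 1 (D2s (D2 f)) := contDiff_D2s hD2f
  have hD1D2f : ContDiff ℝ 2 (D1 (D2 f)) := contDiff_D1 (contDiff_D2 hf)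
  have hLop : Lop f = fun y => D2s (D2 f) y - 3 * f y := funext fun y => by
    rw [D2s_D2 (hf₂.differentiable two_ne_zero y) (hf₂.differentiable_deriv_two y)]
    ring
  have hD2Lop : D2 (Lop f) = D1s (D1 (D2 f)) := funext fun y => by
    rw [hLop, D2_sub_const_mul 3 (hD2sD2f.differentiable one_ne_zero y)
      (hf₂.differentiable two_ne_zero y)]
    exact D2_D2s_sub (hD2f.differentiable two_ne_zero y) (hD2f.differentiable_deriv_two y)
  rw [hD2Lop]
  exact D1_D1s (hD1D2f.differentiable two_ne_zero x) (hD1D2f.differentiable_deriv_two x)
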